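/- arXiv:1110.5308 — 5 statements merged into one kernel-verified Lean document; each statement's English description precedes it below -/
import Mathlib

section
/- Let p > 2 be a prime. Then H_{(p-1)/2}(2) + (7/6)·p·H_{(p-1)/2}(3) + (5/8)·p²·H_{(p-1)/2}(4) ≡ 0 (mod p⁴). -/
/-!
Write `p = 2n + 1`. For any `g`, reflecting `k ↦ p - k` and splitting `1, …, 2n` into even and odd
numbers gives `∑_{k ≤ n} (g (p - k) - g (p - 2k)) = ∑_{k ≤ n} (g (2k) - g k)`.
Take `g j = (2/3)/j² + (4/9) p/j³`. Expanding `1/(p - k)^a` and `1/(p - 2k)^a` in powers of `p/k`,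
the left side is `∑ ((1/2)/k² + (7/9) p/k³ + (5/8) p²/k⁴)` up to `p⁴` times `p`-integral remainders,
while the right side is exactly `∑ (-(1/2)/k² - (7/18) p/k³)`; subtracting gives the congruence.
-/

/-- `x ≡ y (mod p^m)` for rationals: the `p`-adic valuation of `x - y` is at least `m`
(with the convention that `x = y` always satisfies the congruence). -/
def pcong (p m : ℕ) (x y : ℚ) : Prop := x = y ∨ (m : ℤ) ≤ padicValRat p (x - y)

/-- Harmonic sum `H_n(a) = ∑_{k=1}^n 1/k^a`. -/
def Hs (n a : ℕ) : ℚ := ∑ k ∈ Finset.Icc 1 n, 1 / (k : ℚ) ^ a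

open Finset

section Reflection

variable {M G : Type*} [AddCommMonoid M] [AddCommGroup G]

theorem sum_Icc_two_mul_eq_sum_add_sum_reflect (f : ℕ → M) (n : ℕ) :
    ∑ j ∈ Icc 1 (2 * n), f j = ∑ k ∈ Icc 1 n, f k + ∑ k ∈ Icc 1 n, f (2 * n + 1 - k) := by
  have hsplit : Icc 1 (2 * n) = Icc 1 n ∪ Icc (n + 1) (2 * n) := by
    ext j; simp only [mem_union, mem_Icc]; omega
  have hdisj : Disjoint (Icc 1 n) (Icc (n + 1) (2 * n)) :=
    disjoint_left.mpr fun j h₁ h₂ => by simp only [mem_Icc] at h₁ h₂; omega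
  rw [hsplit, sum_union hdisj]
  congr 1
  refine sum_nbij' (fun j => 2 * n + 1 - j) (fun k => 2 * n + 1 - k) ?_ ?_ ?_ ?_ ?_ <;>
    intro j hj <;> simp only [mem_Icc] at hj ⊢
  all_goals first | omega | (congr 1; omega)

theorem sum_Icc_two_mul_eq_sum_pairs (f : ℕ → M) (n : ℕ) :
    ∑ j ∈ Icc 1 (2 * n), f j = ∑ k ∈ Icc 1 n, (f (2 * k - 1) + f (2 * k)) := by
  induction n with
  | zero => simp
  | succ n ih =>
    rw [sum_Icc_succ_top (by omega), ← ih, show 2 * (n + 1) = 2 * n + 1 + 1 by ring,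
      sum_Icc_succ_top (by omega), sum_Icc_succ_top (by omega), add_assoc, Nat.add_sub_cancel]

theorem sum_Icc_two_mul_eq_sum_even_add_sum_odd (f : ℕ → M) (n : ℕ) :
    ∑ j ∈ Icc 1 (2 * n), f j =
      ∑ k ∈ Icc 1 n, f (2 * k) + ∑ k ∈ Icc 1 n, f (2 * n + 1 - 2 * k) := by
  have hodd : ∑ k ∈ Icc 1 n, f (2 * n + 1 - 2 * k) = ∑ k ∈ Icc 1 n, f (2 * k - 1) := by
    refine sum_nbij' (fun k => n + 1 - k) (fun k => n + 1 - k) ?_ ?_ ?_ ?_ ?_ <;>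
      intro k hk <;> simp only [mem_Icc] at hk ⊢
    all_goals first | omega | (congr 1; omega)
  rw [hodd, add_comm, ← sum_add_distrib, sum_Icc_two_mul_eq_sum_pairs]

theorem sum_Icc_reflect_sub_eq (f : ℕ → G) (n : ℕ) :
    ∑ k ∈ Icc 1 n, (f (2 * n + 1 - k) - f (2 * n + 1 - 2 * k)) =
      ∑ k ∈ Icc 1 n, (f (2 * k) - f k) := by
  have h := (sum_Icc_two_mul_eq_sum_add_sum_reflect f n).symm.trans
    (sum_Icc_two_mul_eq_sum_even_add_sum_odd f n)
  simp only [sum_sub_distrib]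
  rw [sub_eq_sub_iff_add_eq_add, ← h, add_comm]

end Reflection

section TermIdentity

variable {R : Type*} [CommRing R]

/-- The ratio of the coefficients `2/3` and `4/9` is chosen so that the expansion of
`harmonicWeight p (p - x)` in powers of `p/x` has no `p³` term. -/
def harmonicWeight (p x : ℚ) : ℚ := 2 / 3 / x ^ 2 + 4 / 9 * p / x ^ 3

/-- Over the common denominator `taylorRemDen`: the remainders after the `p³` term of the expansions
of `1/(x - p)²` and `p/(x - p)³` in powers of `p/x`, at `x = k` and `x = 2k`. -/
def taylorRemNum (p k : R) : R :=
  192 * (5 * k - 4 * p) * (p - k) * (p - 2 * k) ^ 3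
    - 12 * (5 * k - 2 * p) * (p - k) ^ 3 * (p - 2 * k)
    + 128 * (10 * k ^ 2 - 15 * p * k + 6 * p ^ 2) * (p - 2 * k) ^ 3
    - 8 * (20 * k ^ 2 - 15 * p * k + 3 * p ^ 2) * (p - k) ^ 3

def taylorRemDen (p k : R) : R := 288 * k ^ 5 * (p - k) ^ 3 * (p - 2 * k) ^ 3

theorem harmonic_term_eq (p x : ℚ) (hx : x ≠ 0) (h₁ : p - x ≠ 0) (h₂ : p - 2 * x ≠ 0) :
    1 / x ^ 2 + 7 / 6 * p * (1 / x ^ 3) + 5 / 8 * p ^ 2 * (1 / x ^ 4) =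
      (harmonicWeight p (p - x) - harmonicWeight p (p - 2 * x))
        - (harmonicWeight p (2 * x) - harmonicWeight p x)
        - p ^ 4 * (taylorRemNum p x / taylorRemDen p x) := by
  -- the form in which `field_simp` writes this denominator
  have h₂' : p - x * 2 ≠ 0 := by rwa [mul_comm]
  unfold harmonicWeight taylorRemNum taylorRemDen
  field_simp
  ring

theorem coprime_taylorRemDen {p k : ℕ} (hp : p.Prime) (hp3 : 3 < p) (hk : 0 < k)
    (hkp : 2 * k < p) : p.Coprime (288 * k ^ 5 * (p - k) ^ 3 * (p - 2 * k) ^ 3) := by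
  have hlt {m : ℕ} (h₀ : 0 < m) (h₁ : m < p) : p.Coprime m :=
    Nat.coprime_of_lt_prime h₀.ne' h₁ hp
  have h288 : p.Coprime 288 := by
    rw [show 288 = 2 ^ 5 * 3 ^ 2 by norm_num]
    exact ((hlt two_pos (by omega)).pow_right 5).mul_right ((hlt three_pos hp3).pow_right 2)
  exact ((h288.mul_right ((hlt hk (by omega)).pow_right 5)).mul_right
    ((hlt (by omega) (by omega)).pow_right 3)).mul_right ((hlt (by omega) (by omega)).pow_right 3)

theorem padicNorm_taylorRem_le_one {p k : ℕ} [hp : Fact p.Prime] (hp3 : 3 < p) (hk : 0 < k)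
    (hkp : 2 * k < p) :
    padicNorm p (taylorRemNum (p : ℚ) k / taylorRemDen (p : ℚ) k) ≤ 1 := by
  have hnum : taylorRemNum (p : ℚ) k = ((taylorRemNum (p : ℤ) k : ℤ) : ℚ) := by
    push_cast [taylorRemNum]; rfl
  have hden : taylorRemDen (p : ℚ) k =
      ((288 * k ^ 5 * (p - k) ^ 3 * (p - 2 * k) ^ 3 : ℕ) : ℚ) := by
    push_cast [taylorRemDen, Nat.cast_sub (by omega : k ≤ p), Nat.cast_sub hkp.le]
    rfl
  rw [hnum, hden, padicNorm.div,
    (padicNorm.nat_eq_one_iff _).mpr ((Nat.Prime.coprime_iff_not_dvd hp.out).mp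
      (coprime_taylorRemDen hp.out hp3 hk hkp)), div_one]
  exact padicNorm.of_int _

end TermIdentity

theorem pcong_pow_mul_zero {p : ℕ} [hp : Fact p.Prime] (m : ℕ) {y : ℚ}
    (hy : padicNorm p y ≤ 1) : pcong p m (p ^ m * y) 0 := by
  rcases eq_or_ne y 0 with rfl | hy₀
  · exact Or.inl (mul_zero _)
  have hv : 0 ≤ padicValRat p y := by
    rwa [padicNorm.eq_zpow_of_nonzero hy₀,
      zpow_le_one_iff_right₀ (by exact_mod_cast hp.out.one_lt), neg_nonpos] at hy
  right
  rw [sub_zero, padicValRat.mul (by simp [hp.out.ne_zero]) hy₀, padicValRat.pow,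
    padicValRat.self hp.out.one_lt]
  omega

theorem harmonic_combination_eq (p n : ℕ) (hpn : p = 2 * n + 1) :
    Hs n 2 + 7 / 6 * p * Hs n 3 + 5 / 8 * p ^ 2 * Hs n 4 =
      p ^ 4 * -∑ k ∈ Icc 1 n, taylorRemNum (p : ℚ) k / taylorRemDen (p : ℚ) k := by
  have hterm : ∀ k ∈ Icc 1 n,
      1 / (k : ℚ) ^ 2 + 7 / 6 * p * (1 / (k : ℚ) ^ 3) + 5 / 8 * p ^ 2 * (1 / (k : ℚ) ^ 4) =
        (harmonicWeight p ((2 * n + 1 - k : ℕ) : ℚ)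
            - harmonicWeight p ((2 * n + 1 - 2 * k : ℕ) : ℚ))
          - (harmonicWeight p ((2 * k : ℕ) : ℚ) - harmonicWeight p (k : ℚ))
          - p ^ 4 * (taylorRemNum (p : ℚ) k / taylorRemDen (p : ℚ) k) := by
    intro k hk
    rw [mem_Icc] at hk
    have hpk : (p : ℚ) - k ≠ 0 := sub_ne_zero.mpr (by norm_cast; omega)
    have hp2k : (p : ℚ) - 2 * k ≠ 0 := sub_ne_zero.mpr (by norm_cast; omega)
    rw [harmonic_term_eq p k (Nat.cast_ne_zero.mpr (by omega)) hpk hp2k, ← hpn,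
      Nat.cast_sub (by omega), Nat.cast_sub (by omega), Nat.cast_mul, Nat.cast_ofNat]
  simp only [Hs, mul_sum, ← sum_add_distrib]
  rw [sum_congr rfl hterm, sum_sub_distrib, sum_sub_distrib,
    sum_Icc_reflect_sub_eq (fun j : ℕ => harmonicWeight p j), sub_self, zero_sub, mul_neg,
    mul_sum]

theorem stmt0 (p : ℕ) (hp : p.Prime) (hp2 : 2 < p) :
    pcong p 4 (Hs ((p - 1) / 2) 2 + (7 / 6) * p * Hs ((p - 1) / 2) 3
      + (5 / 8) * p ^ 2 * Hs ((p - 1) / 2) 4) 0 := by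
  have := Fact.mk hp
  obtain ⟨n, hpn⟩ := hp.odd_of_ne_two hp2.ne'
  rw [show (p - 1) / 2 = n by omega]
  rcases (show p = 3 ∨ 3 < p by omega) with rfl | hp3
  · -- `3 ∣ taylorRemDen 3 1`, so this case is computed directly
    obtain rfl : n = 1 := by omega
    have h : Hs 1 2 + 7 / 6 * ((3 : ℕ) : ℚ) * Hs 1 3 + 5 / 8 * ((3 : ℕ) : ℚ) ^ 2 * Hs 1 4 =
        (3 : ℕ) ^ 4 * (1 / (8 : ℕ)) := by
      norm_num [Hs]
    rw [h]
    refine pcong_pow_mul_zero 4 ?_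
    rw [padicNorm.div, padicNorm.one, (padicNorm.nat_eq_one_iff 8).mpr (by norm_num), div_one]
  · rw [harmonic_combination_eq p n hpn]
    refine pcong_pow_mul_zero 4 ?_
    rw [padicNorm.neg]
    refine padicNorm.sum_le' (fun k hk => ?_) zero_le_one
    rw [mem_Icc] at hk
    exact padicNorm_taylorRem_le_one hp3 hk.1 (by omega)
end

section
/- Let p > 5 be a prime. Then H_{(p-1)/2}(3) ≡ 6·H_{p-1}(1)/p² − (81/10)·p²·B_{p-5} (mod p³). -/
/-!
Write `p = 2n + 1`. Pairing `k` with `p - k`, and `2k` with `p - 2k`, in the sums over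
`1 ≤ j ≤ p - 1` and expanding `1/(p - k)^a` in powers of `p` gives three `p`-integral relations
between `H_n(2), …, H_n(5)` and `H_{p-1}(1)`; eliminating `H_n(2)` and `H_n(4)` leaves
`H_n(3) ≡ 6 H_{p-1}(1)/p² + (27/20) p² H_n(5) (mod p³)`.
The last ingredient is `H_n(5) ≡ -6 B_{p-5} (mod p)`: by Fermat `H_n(5) ≡ ∑ k^{p-6}`, the same two
pairings relate this sum to `∑_{j<p} j^{p-5}` modulo `p²` (using `2^{p-1} ≡ 1`), and Faulhaber's
formula with von Staudt–Clausen gives `∑_{j<p} j^{p-5} ≡ p B_{p-5} (mod p²)`.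
-/

open Finset

local notation "ℤ_(" p ")" => Valuation.integer (Rat.padicValuation p)

section Integral

variable {p : ℕ} [Fact p.Prime]

theorem inv_natCast_mem_integer {m : ℕ} (hm : ¬ p ∣ m) : (m : ℚ)⁻¹ ∈ ℤ_(p) := by
  rw [Valuation.mem_integer_iff, map_inv₀, ← Int.cast_natCast, Rat.padicValuation_cast,
    Int.padicValuation_eq_one_iff.2 (by exact_mod_cast hm), inv_one]

theorem inv_natCast_mem_integer_of_pos_of_lt {m : ℕ} (h0 : 0 < m) (hm : m < p) :
    (m : ℚ)⁻¹ ∈ ℤ_(p) :=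
  inv_natCast_mem_integer (Nat.not_dvd_of_pos_of_lt h0 hm)

theorem mem_integer_iff_padicValRat_nonneg {x : ℚ} (hx : x ≠ 0) :
    x ∈ ℤ_(p) ↔ 0 ≤ padicValRat p x := by
  simp [Valuation.mem_integer_iff, Rat.padicValuation, hx, ← WithZero.exp_zero, -WithZero.exp_neg]

theorem pcong_iff {m : ℕ} {x y : ℚ} : pcong p m x y ↔ ∃ r ∈ ℤ_(p), x - y = p ^ m * r := by
  rcases eq_or_ne x y with rfl | hxy
  · exact iff_of_true (Or.inl rfl) ⟨0, zero_mem _, by simp⟩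
  have hd : x - y ≠ 0 := sub_ne_zero.2 hxy
  have hpm : (p : ℚ) ^ m ≠ 0 := pow_ne_zero _ (by exact_mod_cast (Fact.out : p.Prime).ne_zero)
  have hv : padicValRat p ((x - y) / p ^ m) = padicValRat p (x - y) - m := by
    rw [padicValRat.div hd hpm, padicValRat.pow, padicValRat.self (Fact.out : p.Prime).one_lt,
      mul_one]
  have hr : ∀ r, x - y = p ^ m * r ↔ r = (x - y) / p ^ m := fun r => by
    rw [eq_div_iff hpm, mul_comm, eq_comm]
  simp only [pcong, hxy, false_or, hr, exists_eq_right,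
    mem_integer_iff_padicValRat_nonneg (div_ne_zero hd hpm), hv, sub_nonneg]

theorem pcong_sum {m : ℕ} {ι : Type*} {s : Finset ι} {f g : ι → ℚ}
    (h : ∀ i ∈ s, pcong p m (f i) (g i)) : pcong p m (∑ i ∈ s, f i) (∑ i ∈ s, g i) := by
  simp only [pcong_iff] at h ⊢
  choose! r hr hfg using h
  exact ⟨∑ i ∈ s, r i, sum_mem hr, by rw [← sum_sub_distrib, mul_sum]; exact sum_congr rfl hfg⟩

theorem pcong_one_div_pow {k a b : ℕ} (hk : ¬ p ∣ k) (hab : a + b = p - 1) :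
    pcong p 1 (1 / (k : ℚ) ^ a) ((k : ℚ) ^ b) := by
  have hp : p.Prime := Fact.out
  have hcop : IsCoprime (k : ℤ) p :=
    Nat.isCoprime_iff_coprime.2 ((Nat.Prime.coprime_iff_not_dvd hp).2 hk).symm
  obtain ⟨w, hw⟩ := (Int.ModEq.pow_card_sub_one_eq_one hp hcop).dvd
  have hwQ : 1 - (k : ℚ) ^ a * (k : ℚ) ^ b = p * w := by
    rw [← pow_add, hab]; exact_mod_cast hw
  have hk0 : (k : ℚ) ≠ 0 := by rintro h; exact hk (by simp [Nat.cast_eq_zero.1 h])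
  refine pcong_iff.2 ⟨w * (k : ℚ)⁻¹ ^ a, mul_mem (intCast_mem _ _)
    (pow_mem (inv_natCast_mem_integer hk) _), ?_⟩
  rw [inv_pow]
  field_simp
  linear_combination hwQ

theorem bernoulli_mem_integer_of_odd (hp : p ≠ 2) {i : ℕ} (hi : Odd i) :
    bernoulli i ∈ ℤ_(p) := by
  rcases eq_or_ne i 1 with rfl | hi1
  · have h2 : ¬ p ∣ 2 := fun h => hp ((Nat.prime_dvd_prime_iff_eq Fact.out Nat.prime_two).1 h)
    rw [bernoulli_one, neg_div, one_div]
    exact neg_mem (by exact_mod_cast inv_natCast_mem_integer h2)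
  · rw [bernoulli_eq_zero_of_odd hi (by grind [Odd])]
    exact zero_mem _

theorem natCast_mul_bernoulli_mem_integer (i : ℕ) : (p : ℚ) * bernoulli i ∈ ℤ_(p) := by
  obtain ⟨k, rfl | rfl⟩ := Nat.even_or_odd' i
  · obtain ⟨z, hz⟩ := Bernoulli.vonStaudt_clausen k
    have hB : bernoulli (2 * k) = z - ∑ q ∈ range (2 * k + 2) with q.Prime ∧ (q - 1) ∣ 2 * k,
        (1 : ℚ) / q := by rw [hz]; ring
    rw [hB, mul_sub, mul_sum]
    refine sub_mem (mul_mem (natCast_mem _ _) (intCast_mem _ _)) (sum_mem fun q hq => ?_)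
    have hq : q.Prime := (mem_filter.1 hq).2.1
    rcases eq_or_ne q p with rfl | hqp
    · rw [mul_one_div_cancel (by exact_mod_cast hq.ne_zero)]
      exact one_mem _
    · rw [one_div]
      exact mul_mem (natCast_mem _ _) (inv_natCast_mem_integer
        fun h => hqp ((Nat.prime_dvd_prime_iff_eq Fact.out hq).1 h).symm)
  · rcases eq_or_ne p 2 with rfl | hp2
    · rcases eq_or_ne k 0 with rfl | hk
      · norm_num [bernoulli_one]
      · rw [bernoulli_eq_zero_of_odd (odd_two_mul_add_one k) (by omega), mul_zero]
        exact zero_mem _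
    · exact mul_mem (natCast_mem _ _) (bernoulli_mem_integer_of_odd hp2 (odd_two_mul_add_one k))

theorem pcong_sum_range_pow {l : ℕ} (hl : ¬ p ∣ l + 2) (hB : bernoulli l ∈ ℤ_(p)) :
    pcong p 2 (∑ k ∈ range p, (k : ℚ) ^ (l + 1)) (p * bernoulli (l + 1)) := by
  have hinv : ((l : ℚ) + 1 + 1)⁻¹ ∈ ℤ_(p) := by exact_mod_cast inv_natCast_mem_integer hl
  have hl2 : (l : ℚ) + 1 + 1 ≠ 0 := by positivity
  refine pcong_iff.2 ⟨bernoulli l * ((l + 2).choose l : ℕ) * ((l : ℚ) + 1 + 1)⁻¹ +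
    ∑ i ∈ range l, p * bernoulli i * ((l + 2).choose i : ℕ) * p ^ (l - 1 - i) *
      ((l : ℚ) + 1 + 1)⁻¹, ?_, ?_⟩
  · exact add_mem (by apply_rules [mul_mem, natCast_mem]) (sum_mem fun i _ => by
      apply_rules [natCast_mul_bernoulli_mem_integer, mul_mem, natCast_mem, pow_mem])
  · have hlow : ∀ i ∈ range l, bernoulli i * ((l + 1 + 1).choose i : ℕ) * (p : ℚ) ^ (l + 1 + 1 - i)
        / (((l + 1 : ℕ) : ℚ) + 1) = p ^ 2 * (p * bernoulli i * ((l + 2).choose i : ℕ) *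
          p ^ (l - 1 - i) * ((l : ℚ) + 1 + 1)⁻¹) := fun i hi => by
      rw [show l + 1 + 1 - i = l - 1 - i + 3 by simp only [mem_range] at hi; omega]
      push_cast
      ring
    have htop : bernoulli (l + 1) * ((l + 1 + 1).choose (l + 1) : ℕ) *
        (p : ℚ) ^ (l + 1 + 1 - (l + 1)) / (((l + 1 : ℕ) : ℚ) + 1) = p * bernoulli (l + 1) := by
      rw [Nat.choose_succ_self_right, show l + 1 + 1 - (l + 1) = 1 by omega]
      push_cast
      field_simp
    rw [sum_range_pow, sum_range_succ, sum_range_succ, sum_congr rfl hlow, htop,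
      show l + 1 + 1 - l = 2 by omega, mul_add, mul_sum]
    push_cast
    ring

end Integral

section Reindex

variable {M : Type*} [AddCommMonoid M] {p n : ℕ}

theorem sum_range_eq_sum_Icc {f : ℕ → M} (hf : f 0 = 0) :
    ∑ j ∈ range p, f j = ∑ j ∈ Icc 1 (p - 1), f j := by
  rcases p with _ | p
  · simp
  · rw [range_eq_Ico, sum_eq_sum_Ico_succ_bot (by omega), hf, zero_add, add_tsub_cancel_right,
      Finset.Ico_add_one_right_eq_Icc]

theorem sum_Icc_eq_sum_add_reflect (hpn : p = 2 * n + 1) (f : ℕ → M) :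
    ∑ j ∈ Icc 1 (p - 1), f j = ∑ k ∈ Icc 1 n, (f k + f (p - k)) := by
  have hsplit : Icc 1 (p - 1) = Icc 1 n ∪ Icc (n + 1) (p - 1) := by
    ext x; simp only [mem_Icc, mem_union]; omega
  rw [hsplit, sum_union (disjoint_left.2 fun _ => by simp only [mem_Icc]; omega), sum_add_distrib]
  congr 1
  refine sum_nbij' (fun j => p - j) (fun k => p - k) ?_ ?_ ?_ ?_ ?_ <;>
    simp only [mem_Icc] <;> intros <;> first | omega | (congr 1; omega)

theorem sum_Icc_eq_sum_even_add_odd (hpn : p = 2 * n + 1) (f : ℕ → M) :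
    ∑ j ∈ Icc 1 (p - 1), f j = ∑ k ∈ Icc 1 n, (f (2 * k) + f (p - 2 * k)) := by
  have hsplit : Icc 1 (p - 1) = (Icc 1 n).image (2 * ·) ∪ (Icc 1 n).image (p - 2 * ·) := by
    ext x
    simp only [mem_Icc, mem_union, mem_image]
    constructor
    · intro hx
      rcases Nat.even_or_odd' x with ⟨c, rfl | rfl⟩
      · exact Or.inl ⟨c, by omega, rfl⟩
      · exact Or.inr ⟨n - c, by omega, by omega⟩
    · rintro (⟨i, hi, rfl⟩ | ⟨i, hi, rfl⟩) <;> omega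
  rw [hsplit, sum_union, sum_image, sum_image, sum_add_distrib]
  · intro a ha b hb h; simp only [coe_Icc, Set.mem_Icc] at ha hb h; omega
  · intro a _ b _ h; simp only at h; omega
  · simp only [disjoint_left, mem_image, mem_Icc]
    rintro x ⟨i, hi, rfl⟩ ⟨j, hj, hij⟩
    omega

end Reindex

theorem natCast_dvd_sum_range_pow {p e : ℕ} (hp : p.Prime) (he : e < p - 1) :
    (p : ℤ) ∣ ∑ j ∈ range p, (j : ℤ) ^ e := by
  have : Fact p.Prime := ⟨hp⟩
  have hbij : Function.Bijective fun i : Fin p => ((i : ℕ) : ZMod p) :=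
    (Fintype.bijective_iff_surjective_and_card _).2
      ⟨fun x => ⟨⟨x.val, x.val_lt⟩, x.natCast_zmod_val⟩, by simp⟩
  rw [← ZMod.intCast_zmod_eq_zero_iff_dvd]
  push_cast
  rw [← Fin.sum_univ_eq_sum_range (fun j => (j : ZMod p) ^ e),
    Fintype.sum_bijective _ hbij _ (fun x => x ^ e) fun _ => rfl]
  exact FiniteField.sum_pow_lt_card_sub_one (ZMod p) e (by rwa [ZMod.card])

theorem sq_dvd_sub_pow_sub_pow_add {m : ℕ} (hm : Odd m) (p a : ℤ) :
    p ^ 2 ∣ (p - a) ^ (m + 1) - a ^ (m + 1) + (m + 1) * p * a ^ m := by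
  have h := sq_dvd_add_pow_sub_sub p (-a) (m + 1)
  rw [neg_add_eq_sub, add_tsub_cancel_right, hm.add_one.neg_pow, hm.neg_pow] at h
  exact h.trans (dvd_of_eq (by push_cast; ring))

theorem sq_dvd_sum_pow_add_sub_pow {ι : Type*} {m : ℕ} (hm : Odd m) (s : Finset ι) (a : ι → ℤ)
    (p : ℤ) : p ^ 2 ∣ ∑ i ∈ s, (a i ^ (m + 1) + (p - a i) ^ (m + 1))
      - (2 * ∑ i ∈ s, a i ^ (m + 1) - (m + 1) * p * ∑ i ∈ s, a i ^ m) := by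
  have h : ∑ i ∈ s, (a i ^ (m + 1) + (p - a i) ^ (m + 1))
      - (2 * ∑ i ∈ s, a i ^ (m + 1) - (m + 1) * p * ∑ i ∈ s, a i ^ m)
      = ∑ i ∈ s, ((p - a i) ^ (m + 1) - a i ^ (m + 1) + (m + 1) * p * a i ^ m) := by
    simp only [sum_add_distrib, sum_sub_distrib, ← mul_sum]
    ring
  rw [h]
  exact dvd_sum fun i _ => sq_dvd_sub_pow_sub_pow_add hm p (a i)

theorem sq_dvd_thirty_mul_sum_range_pow_add {p n : ℕ} (hp : p.Prime) (hpn : p = 2 * n + 1)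
    (hp5 : 5 < p) : (p : ℤ) ^ 2 ∣
      30 * ∑ j ∈ range p, (j : ℤ) ^ (p - 5) + 5 * p * ∑ k ∈ Icc 1 n, (k : ℤ) ^ (p - 6) := by
  set m := p - 6
  have hm : Odd m := ⟨n - 3, by omega⟩
  have hmp : (m : ℤ) = p - 6 := by omega
  rw [show p - 5 = m + 1 by omega]
  set A := ∑ j ∈ range p, (j : ℤ) ^ (m + 1)
  set U := ∑ k ∈ Icc 1 n, (k : ℤ) ^ (m + 1)
  set V := ∑ k ∈ Icc 1 n, (k : ℤ) ^ m
  have hA : A = ∑ j ∈ Icc 1 (p - 1), (j : ℤ) ^ (m + 1) := sum_range_eq_sum_Icc (by simp)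
  obtain ⟨c₁, h₁⟩ : (p : ℤ) ^ 2 ∣ A - (2 * U - (m + 1) * p * V) := by
    rw [hA, sum_Icc_eq_sum_add_reflect hpn (fun j => (j : ℤ) ^ (m + 1))]
    convert sq_dvd_sum_pow_add_sub_pow hm (Icc 1 n) (fun k => (k : ℤ)) p using 6 with k hk
    exact Nat.cast_sub (by simp only [mem_Icc] at hk; omega)
  obtain ⟨c₂, h₂⟩ : (p : ℤ) ^ 2 ∣ A - (2 ^ (m + 2) * U - (m + 1) * p * 2 ^ m * V) := by
    rw [hA, sum_Icc_eq_sum_even_add_odd hpn (fun j => (j : ℤ) ^ (m + 1))]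
    convert sq_dvd_sum_pow_add_sub_pow hm (Icc 1 n) (fun k => 2 * (k : ℤ)) p using 2
    · refine sum_congr rfl fun k hk => ?_
      rw [Nat.cast_sub (by simp only [mem_Icc] at hk; omega)]
      push_cast
      rfl
    · simp only [mul_pow, ← mul_sum]
      ring
  obtain ⟨s, hs⟩ : (p : ℤ) ∣ A := natCast_dvd_sum_range_pow hp (by omega)
  obtain ⟨q, hq⟩ : (p : ℤ) ∣ 2 ^ (m + 5) - 1 := by
    rw [show m + 5 = p - 1 by omega]
    refine (Int.ModEq.pow_card_sub_one_eq_one hp ?_).symm.dvd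
    exact_mod_cast Nat.isCoprime_iff_coprime.2 ((Nat.coprime_primes Nat.prime_two hp).2 (by omega))
  -- `2^{m+1} h₁ - h₂` eliminates `U`; then use `2^{m+5} = 1 + p q` and `A = p s`
  exact ⟨-32 * (2 * 2 ^ m * c₁ - c₂) + 2 * q * s + V + (p - 5) * q * V, by
    linear_combination (-64 * 2 ^ m) * h₁ + 32 * h₂ + (2 * A + (p - 5) * p * V) * hq +
      2 * p * q * hs + (32 * p * 2 ^ m * V) * hmp⟩

theorem natCast_ne_zero_of_mem_Icc {p n : ℕ} (hpn : p = 2 * n + 1) {k : ℕ} (hk : k ∈ Icc 1 n) :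
    (k : ℚ) ≠ 0 ∧ ((p - k : ℕ) : ℚ) ≠ 0 ∧ ((p - 2 * k : ℕ) : ℚ) ≠ 0 := by
  simp only [mem_Icc] at hk
  exact ⟨Nat.cast_ne_zero.2 (by omega), Nat.cast_ne_zero.2 (by omega),
    Nat.cast_ne_zero.2 (by omega)⟩

section HalfSums

variable {p n : ℕ} [Fact p.Prime]

theorem inv_mem_integer_of_mem_Icc (hpn : p = 2 * n + 1) {k : ℕ} (hk : k ∈ Icc 1 n) :
    (k : ℚ)⁻¹ ∈ ℤ_(p) ∧ ((p - k : ℕ) : ℚ)⁻¹ ∈ ℤ_(p) ∧ ((p - 2 * k : ℕ) : ℚ)⁻¹ ∈ ℤ_(p) := by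
  simp only [mem_Icc] at hk
  exact ⟨inv_natCast_mem_integer_of_pos_of_lt (by omega) (by omega),
    inv_natCast_mem_integer_of_pos_of_lt (by omega) (by omega),
    inv_natCast_mem_integer_of_pos_of_lt (by omega) (by omega)⟩

theorem pcong_Hs_pred_one (hpn : p = 2 * n + 1) :
    pcong p 5 (Hs (p - 1) 1 + p * Hs n 2 + p ^ 2 * Hs n 3 + p ^ 3 * Hs n 4 + p ^ 4 * Hs n 5) 0 := by
  refine pcong_iff.2 ⟨∑ k ∈ Icc 1 n, (k : ℚ)⁻¹ ^ 5 * ((p - k : ℕ) : ℚ)⁻¹,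
    sum_mem fun k hk => ?_, ?_⟩
  · obtain ⟨h₁, h₂, -⟩ := inv_mem_integer_of_mem_Icc hpn hk
    exact mul_mem (pow_mem h₁ _) h₂
  · rw [Hs, sum_Icc_eq_sum_add_reflect hpn, sub_zero]
    simp only [Hs, mul_sum, ← sum_add_distrib]
    refine sum_congr rfl fun k hk => ?_
    obtain ⟨h₁, h₂, -⟩ := natCast_ne_zero_of_mem_Icc hpn hk
    field_simp
    push_cast [Nat.cast_sub (by simp only [mem_Icc] at hk; omega : k ≤ p)]
    ring

theorem pcong_Hs_two (hpn : p = 2 * n + 1) :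
    pcong p 4 (24 * Hs n 2 + 28 * p * Hs n 3 + 45 * p ^ 2 * Hs n 4 + 62 * p ^ 3 * Hs n 5) 0 := by
  refine pcong_iff.2 ⟨∑ k ∈ Icc 1 n, (k : ℚ)⁻¹ ^ 5 * ((5 * k - 2 * p) * ((p - 2 * k : ℕ) : ℚ)⁻¹ ^ 2
    - 16 * (5 * k - 4 * p) * ((p - k : ℕ) : ℚ)⁻¹ ^ 2), sum_mem fun k hk => ?_, ?_⟩
  · obtain ⟨h₁, h₂, h₃⟩ := inv_mem_integer_of_mem_Icc hpn hk
    apply_rules [mul_mem, sub_mem, pow_mem, natCast_mem, ofNat_mem]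
  · have h := (sum_Icc_eq_sum_even_add_odd hpn fun j => 1 / (j : ℚ) ^ 2).symm.trans
      (sum_Icc_eq_sum_add_reflect hpn fun j => 1 / (j : ℚ) ^ 2)
    rw [← sub_eq_zero] at h
    -- add `16 * 0`, written as the difference of the two splittings of `H_{p-1}(2)`
    rw [sub_zero, ← add_zero (_ + _), ← mul_zero 16, ← h]
    simp only [Hs, mul_sum, ← sum_sub_distrib, ← sum_add_distrib]
    refine sum_congr rfl fun k hk => ?_
    obtain ⟨h₁, h₂, h₃⟩ := natCast_ne_zero_of_mem_Icc hpn hk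
    simp only [mem_Icc] at hk
    field_simp
    push_cast [Nat.cast_sub (by omega : k ≤ p), Nat.cast_sub (by omega : 2 * k ≤ p)]
    ring

theorem pcong_Hs_four (hpn : p = 2 * n + 1) : pcong p 2 (15 * Hs n 4 + 31 * p * Hs n 5) 0 := by
  have h2 : (2 : ℚ)⁻¹ ∈ ℤ_(p) := by
    have := (Fact.out : p.Prime).two_le
    exact_mod_cast inv_natCast_mem_integer_of_pos_of_lt (p := p) (m := 2) (by omega) (by omega)
  refine pcong_iff.2 ⟨∑ k ∈ Icc 1 n, (k : ℚ)⁻¹ ^ 5 *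
    ((40 * k ^ 3 - 40 * k ^ 2 * p + 15 * k * p ^ 2 - 2 * p ^ 3) * 2⁻¹ * ((p - 2 * k : ℕ) : ℚ)⁻¹ ^ 4
      - 8 * (10 * k ^ 3 - 20 * k ^ 2 * p + 15 * k * p ^ 2 - 4 * p ^ 3) * ((p - k : ℕ) : ℚ)⁻¹ ^ 4),
    sum_mem fun k hk => ?_, ?_⟩
  · obtain ⟨h₁, h₂, h₃⟩ := inv_mem_integer_of_mem_Icc hpn hk
    apply_rules (maxDepth := 100) [mul_mem, sub_mem, add_mem, pow_mem, natCast_mem, ofNat_mem]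
  · have h := (sum_Icc_eq_sum_even_add_odd hpn fun j => 1 / (j : ℚ) ^ 4).symm.trans
      (sum_Icc_eq_sum_add_reflect hpn fun j => 1 / (j : ℚ) ^ 4)
    rw [← sub_eq_zero] at h
    rw [sub_zero, ← add_zero (_ + _), ← mul_zero 8, ← h]
    simp only [Hs, mul_sum, ← sum_sub_distrib, ← sum_add_distrib]
    refine sum_congr rfl fun k hk => ?_
    obtain ⟨h₁, h₂, h₃⟩ := natCast_ne_zero_of_mem_Icc hpn hk
    simp only [mem_Icc] at hk
    field_simp
    push_cast [Nat.cast_sub (by omega : k ≤ p), Nat.cast_sub (by omega : 2 * k ≤ p)]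
    ring

theorem pcong_Hs_five (hpn : p = 2 * n + 1) (hp5 : 5 < p) :
    pcong p 1 (Hs n 5) (-6 * bernoulli (p - 5)) := by
  have hp : p.Prime := Fact.out
  have hFermat : pcong p 1 (Hs n 5) (∑ k ∈ Icc 1 n, (k : ℚ) ^ (p - 6)) := pcong_sum fun k hk => by
    simp only [mem_Icc] at hk
    exact pcong_one_div_pow (Nat.not_dvd_of_pos_of_lt (by omega) (by omega)) (by omega)
  obtain ⟨ρ, hρ, h₁⟩ := pcong_iff.1 hFermat
  obtain ⟨σ, hσ, h₂⟩ := pcong_iff.1 (pcong_sum_range_pow (p := p) (l := p - 6)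
    (Nat.not_dvd_of_pos_of_lt (by omega) (by omega))
    (bernoulli_mem_integer_of_odd (by omega) ⟨n - 3, by omega⟩))
  rw [show p - 6 + 1 = p - 5 by omega] at h₂
  obtain ⟨c, hc⟩ := sq_dvd_thirty_mul_sum_range_pow_add hp hpn hp5
  have hcQ : 30 * ∑ j ∈ range p, (j : ℚ) ^ (p - 5) + 5 * p * ∑ k ∈ Icc 1 n, (k : ℚ) ^ (p - 6)
      = p ^ 2 * c := by exact_mod_cast hc
  have h5 : (5 : ℚ)⁻¹ ∈ ℤ_(p) := by
    exact_mod_cast inv_natCast_mem_integer_of_pos_of_lt (p := p) (m := 5) (by omega) hp5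
  refine pcong_iff.2 ⟨ρ + (c - 30 * σ) * 5⁻¹,
    add_mem hρ (mul_mem (sub_mem (intCast_mem _ _) (mul_mem (ofNat_mem _ _) hσ)) h5), ?_⟩
  apply mul_left_cancel₀ (Nat.cast_ne_zero.2 hp.ne_zero : (p : ℚ) ≠ 0)
  linear_combination p * h₁ + hcQ / 5 - 6 * h₂

end HalfSums

theorem stmt3 (p : ℕ) (hp : p.Prime) (hp5 : 5 < p) :
    pcong p 3 (Hs ((p - 1) / 2) 3)
      (6 * Hs (p - 1) 1 / p ^ 2 - (81 / 10) * p ^ 2 * bernoulli (p - 5)) := by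
  have : Fact p.Prime := ⟨hp⟩
  obtain ⟨n, hpn⟩ : ∃ n, p = 2 * n + 1 := hp.eq_two_or_odd'.resolve_left (by omega)
  rw [show (p - 1) / 2 = n by omega]
  obtain ⟨r₁, hr₁, h₁⟩ := pcong_iff.1 (pcong_Hs_pred_one hpn)
  obtain ⟨r₂, hr₂, h₂⟩ := pcong_iff.1 (pcong_Hs_two hpn)
  obtain ⟨r₃, hr₃, h₃⟩ := pcong_iff.1 (pcong_Hs_four hpn)
  obtain ⟨r₄, hr₄, h₄⟩ := pcong_iff.1 (pcong_Hs_five hpn hp5)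
  have h4 : (4 : ℚ)⁻¹ ∈ ℤ_(p) := by
    exact_mod_cast inv_natCast_mem_integer_of_pos_of_lt (p := p) (m := 4) (by omega) (by omega)
  have h5 : (5 : ℚ)⁻¹ ∈ ℤ_(p) := by
    exact_mod_cast inv_natCast_mem_integer_of_pos_of_lt (p := p) (m := 5) (by omega) hp5
  have hp0 : (p : ℚ) ^ 2 ≠ 0 := pow_ne_zero 2 (Nat.cast_ne_zero.2 hp.ne_zero)
  refine pcong_iff.2 ⟨(-120 * r₁ + 5 * r₂ - 7 * r₃ + 27 * r₄) * (4⁻¹ * 5⁻¹), ?_, ?_⟩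
  · apply_rules [mul_mem, add_mem, sub_mem, neg_mem, ofNat_mem]
  · apply mul_left_cancel₀ hp0
    have hdiv : (p : ℚ) ^ 2 * (6 * Hs (p - 1) 1 / p ^ 2) = 6 * Hs (p - 1) 1 := by field_simp
    linear_combination -hdiv - 6 * h₁ + p / 4 * h₂ - 7 / 20 * p ^ 3 * h₃ + 27 / 20 * p ^ 4 * h₄
end

section
/- Let r and a be positive integers and let p > r + 2 be a prime. Then H_{p-1}(r) ≡ H_{(p-1)/2}(r) + (−1)^r · Σ_{k=0}^{a} binom(r−1+k, k) · H_{(p-1)/2}(r+k) · p^k (mod p^{a+1}). -/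
open Finset Polynomial

namespace PowerSeries

variable {R : Type*} [CommRing R]

theorem X_pow_dvd_one_sub_one_sub_X_pow_mul_trunc (r n : ℕ) :
    (Polynomial.X : R[X]) ^ n ∣ 1 - (1 - Polynomial.X) ^ r * trunc n (invOneSubPow R r).val := by
  rw [Polynomial.X_pow_dvd_iff]
  intro d hd
  have hsplit := eq_X_pow_mul_shift_add_trunc n (invOneSubPow R r).val
  set s := mk fun i ↦ coeff (i + n) (invOneSubPow R r).val
  have key : ((1 - (1 - Polynomial.X) ^ r * trunc n (invOneSubPow R r).val : R[X]) : PowerSeries R)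
      = PowerSeries.X ^ n * ((1 - PowerSeries.X) ^ r * s) := by
    have hinv : (1 - PowerSeries.X : PowerSeries R) ^ r * (invOneSubPow R r).val = 1 := by
      rw [← invOneSubPow_inv_eq_one_sub_pow]
      exact (invOneSubPow R r).inv_val
    push_cast
    linear_combination (1 - PowerSeries.X : PowerSeries R) ^ r * hsplit - hinv
  rw [← Polynomial.coeff_coe, key, coeff_X_pow_mul', if_neg (by omega)]

theorem aeval_trunc_invOneSubPow {A : Type*} [CommRing A] [Algebra R A] {r : ℕ} (hr : 0 < r)
    (n : ℕ) (x : A) :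
    Polynomial.aeval x (trunc n (invOneSubPow R r).val) =
      ∑ k ∈ range n, ((r - 1 + k).choose k : A) * x ^ k := by
  rw [aeval_def, eval₂_trunc_eq_sum_range,
    invOneSubPow_val_eq_mk_sub_one_add_choose_of_pos R r hr]
  refine sum_congr rfl fun k _ ↦ ?_
  rw [coeff_mk, Nat.choose_symm_add]
  simp

end PowerSeries

namespace padicNorm

variable {p : ℕ} [Fact p.Prime]

theorem aeval_le_one (Q : ℤ[X]) {x : ℚ} (hx : padicNorm p x ≤ 1) :
    padicNorm p (aeval x Q) ≤ 1 := by
  rw [aeval_def, eval₂_eq_sum_range]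
  refine sum_le' (fun i _ ↦ ?_) zero_le_one
  rw [padicNorm.mul, IsAbsoluteValue.abv_pow (padicNorm p)]
  exact mul_le_one₀ (padicNorm.of_int _) (pow_nonneg (padicNorm.nonneg _) _)
    (pow_le_one₀ (padicNorm.nonneg _) hx)

theorem one_sub_eq_one_of_lt_one {x : ℚ} (hx : padicNorm p x < 1) : padicNorm p (1 - x) = 1 := by
  rw [sub_eq_add_neg, add_eq_max_of_ne] <;> simp [padicNorm.neg, hx.ne', hx.le]

theorem inv_one_sub_pow_sub_sum_choose_le {r : ℕ} (hr : 0 < r) (n : ℕ) {x : ℚ}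
    (hx : padicNorm p x < 1) :
    padicNorm p (((1 - x) ^ r)⁻¹ - ∑ k ∈ range n, ((r - 1 + k).choose k : ℚ) * x ^ k) ≤
      padicNorm p x ^ n := by
  obtain ⟨Q, hQ⟩ := PowerSeries.X_pow_dvd_one_sub_one_sub_X_pow_mul_trunc (R := ℤ) r n
  have hunit : padicNorm p (1 - x) = 1 := one_sub_eq_one_of_lt_one hx
  have h1x : 1 - x ≠ 0 := fun h ↦ by simp [h] at hunit
  have hQx := congrArg (aeval x) hQ
  simp only [map_sub, map_mul, map_pow, map_one, aeval_X,
    PowerSeries.aeval_trunc_invOneSubPow hr] at hQx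
  have herr : ((1 - x) ^ r)⁻¹ - ∑ k ∈ range n, ((r - 1 + k).choose k : ℚ) * x ^ k =
      x ^ n * aeval x Q / (1 - x) ^ r := by
    field_simp
    linear_combination hQx
  rw [herr, padicNorm.div, padicNorm.mul, IsAbsoluteValue.abv_pow (padicNorm p),
    IsAbsoluteValue.abv_pow (padicNorm p), hunit, one_pow, div_one]
  exact mul_le_of_le_one_right (pow_nonneg (padicNorm.nonneg _) _) (aeval_le_one Q hx.le)

end padicNorm

theorem Hs_succ (n a : ℕ) : Hs (n + 1) a = Hs n a + 1 / ((n + 1 : ℕ) : ℚ) ^ a :=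
  sum_Icc_succ_top (by omega) _

theorem Hs_add_eq_add_sum_reflect (r : ℕ) {m n p : ℕ} (h : m + n + 1 = p) :
    Hs (m + n) r = Hs m r + ∑ j ∈ Icc 1 n, 1 / ((p : ℚ) - j) ^ r := by
  induction n generalizing m with
  | zero => simp
  | succ n ih =>
    have hlast : (p : ℚ) - (n + 1 : ℕ) = (m + 1 : ℕ) := by
      rw [← h]; push_cast; ring
    rw [show m + (n + 1) = m + 1 + n by omega, ih (by omega), Hs_succ,
      sum_Icc_succ_top (by omega), hlast]
    ring

theorem sum_choose_mul_Hs_mul_pow (r m a : ℕ) (x : ℚ) :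
    ∑ k ∈ range (a + 1), ((r - 1 + k).choose k : ℚ) * Hs m (r + k) * x ^ k =
      ∑ j ∈ Icc 1 m,
        1 / (j : ℚ) ^ r * ∑ k ∈ range (a + 1), ((r - 1 + k).choose k : ℚ) * (x / j) ^ k := by
  simp only [Hs, mul_sum, sum_mul]
  rw [sum_comm]
  refine sum_congr rfl fun j _ ↦ sum_congr rfl fun k _ ↦ ?_
  ring

theorem padicNorm_one_div_sub_pow_sub_binomial_expansion_le {p : ℕ} [hp : Fact p.Prime] {r : ℕ}
    (hr : 0 < r) (a : ℕ) {j : ℕ} (hj : ¬ p ∣ j) :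
    padicNorm p (1 / ((p : ℚ) - j) ^ r - (-1) ^ r * (1 / (j : ℚ) ^ r *
      ∑ k ∈ range (a + 1), ((r - 1 + k).choose k : ℚ) * ((p : ℚ) / j) ^ k)) ≤
      ((p : ℚ) ^ (a + 1))⁻¹ := by
  have hj0 : (j : ℚ) ≠ 0 := by rintro h; exact hj (by simp [Nat.cast_eq_zero.mp h])
  have hnj : padicNorm p (j : ℚ) = 1 := (padicNorm.nat_eq_one_iff j).mpr hj
  have hnx : padicNorm p ((p : ℚ) / j) = (p : ℚ)⁻¹ := by
    rw [padicNorm.div, padicNorm.padicNorm_p_of_prime, hnj, div_one]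
  have hx : padicNorm p ((p : ℚ) / j) < 1 :=
    hnx ▸ inv_lt_one_of_one_lt₀ (mod_cast hp.out.one_lt)
  have hfactor : 1 / ((p : ℚ) - j) ^ r - (-1) ^ r * (1 / (j : ℚ) ^ r *
      ∑ k ∈ range (a + 1), ((r - 1 + k).choose k : ℚ) * ((p : ℚ) / j) ^ k) =
      (-1) ^ r / (j : ℚ) ^ r * (((1 - (p : ℚ) / j) ^ r)⁻¹ -
        ∑ k ∈ range (a + 1), ((r - 1 + k).choose k : ℚ) * ((p : ℚ) / j) ^ k) := by
    have hsub : (p : ℚ) - j = -j * (1 - p / j) := by field_simp; ring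
    have hsign : ((-1 : ℚ) ^ r)⁻¹ = (-1) ^ r := by rw [← inv_pow, inv_neg, inv_one]
    rw [hsub, mul_pow, neg_pow, one_div, mul_inv, mul_inv, hsign]
    ring
  rw [hfactor, padicNorm.mul, padicNorm.div, IsAbsoluteValue.abv_pow (padicNorm p),
    IsAbsoluteValue.abv_pow (padicNorm p), padicNorm.neg, padicNorm.one, hnj, one_pow,
    div_one, one_mul, ← inv_pow (p : ℚ), ← hnx]
  exact padicNorm.inv_one_sub_pow_sub_sum_choose_le hr _ hx

theorem pcong_of_padicNorm_le {p : ℕ} [hp : Fact p.Prime] {m : ℕ} {x y : ℚ}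
    (h : padicNorm p (x - y) ≤ ((p : ℚ) ^ m)⁻¹) : pcong p m x y := by
  by_cases hxy : x = y
  · exact Or.inl hxy
  · right
    rw [padicNorm.eq_zpow_of_nonzero (sub_ne_zero.mpr hxy), ← zpow_natCast, ← zpow_neg,
      zpow_le_zpow_iff_right₀ (mod_cast hp.out.one_lt)] at h
    omega

theorem stmt5_general (p r a : ℕ) (hr : 0 < r) (hp : p.Prime) (hpr : r + 2 < p) :
    pcong p (a + 1) (Hs (p - 1) r)
      (Hs ((p - 1) / 2) r + (-1 : ℚ) ^ r *
        ∑ k ∈ Finset.range (a + 1),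
          (Nat.choose (r - 1 + k) k : ℚ) * Hs ((p - 1) / 2) (r + k) * (p : ℚ) ^ k) := by
  have := Fact.mk hp
  obtain ⟨m, hm⟩ : Odd p := hp.odd_of_ne_two (by omega)
  rw [show p - 1 = m + m by omega, show (m + m) / 2 = m by omega,
    Hs_add_eq_add_sum_reflect r (show m + m + 1 = p by omega), sum_choose_mul_Hs_mul_pow]
  apply pcong_of_padicNorm_le
  rw [add_sub_add_left_eq_sub, mul_sum, ← sum_sub_distrib]
  refine padicNorm.sum_le' (fun j hj ↦ ?_) (by positivity)
  obtain ⟨hj1, hjm⟩ := mem_Icc.mp hj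
  exact padicNorm_one_div_sub_pow_sub_binomial_expansion_le hr a
    (Nat.not_dvd_of_pos_of_lt hj1 (by omega))

theorem stmt5 (p r a : ℕ) (hr : 0 < r) (ha : 0 < a) (hp : p.Prime) (hpr : r + 2 < p) :
    pcong p (a + 1) (Hs (p - 1) r)
      (Hs ((p - 1) / 2) r + (-1 : ℚ) ^ r *
        ∑ k ∈ Finset.range (a + 1),
          (Nat.choose (r - 1 + k) k : ℚ) * Hs ((p - 1) / 2) (r + k) * (p : ℚ) ^ k) :=
  stmt5_general p r a hr hp hpr
end

section
/- For every non-negative integer n and every real number t, ∫_0^t w_n(1 − τ²/2) dτ = 2·Σ_{k=0}^{n-1} (−1)^k·v_{2k+1}(t)/(2k+1) + (−1)^n·v_{2n+1}(t)/(2n+1). -/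
/-!
Write `D_n(t) = 2 ∑_{k<n} (-1)^k u_{2k+1}(t) + (-1)^n u_{2n+1}(t)`. The differences
`w_{n+1} - w_n` at `1 - t²/2` satisfy the recurrence of `(-1)^{n+1} v_{2n+2}(t)`, and
`v_{m+1} = u_{m+2} - u_m`, so `w_n(1 - t²/2) = D_n(t)` by telescoping. Since `v_m' = m u_m`,
the right-hand side of the theorem is an antiderivative of `D_n`; it vanishes at `0` because
the odd-index `v`'s are odd polynomials.
-/

/-- Lucas sequence `v_n(x)` of real argument: `v_0 = 2`, `v_1 = x`, `v_n = x v_{n-1} - v_{n-2}`. -/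
noncomputable def lucasVR (x : ℝ) : ℕ → ℝ
  | 0 => 2
  | 1 => x
  | n + 2 => x * lucasVR x (n + 1) - lucasVR x n

/-- The sequence `w_n(x)` of real argument: `w_0 = 1`, `w_1 = 1 + 2x`, `w_{n+1} = 2x w_n - w_{n-1}`. -/
noncomputable def wSeqR (x : ℝ) : ℕ → ℝ
  | 0 => 1
  | 1 => 1 + 2 * x
  | n + 2 => 2 * x * wSeqR x (n + 1) - wSeqR x n

noncomputable def lucasUR (x : ℝ) : ℕ → ℝ
  | 0 => 0
  | 1 => 1
  | n + 2 => x * lucasUR x (n + 1) - lucasUR x n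

section Recurrences

variable (x : ℝ) (n : ℕ)

lemma lucasUR_add_two : lucasUR x (n + 2) = x * lucasUR x (n + 1) - lucasUR x n := rfl

lemma lucasVR_add_two : lucasVR x (n + 2) = x * lucasVR x (n + 1) - lucasVR x n := rfl

lemma wSeqR_add_two : wSeqR x (n + 2) = 2 * x * wSeqR x (n + 1) - wSeqR x n := rfl

end Recurrences

lemma add_four_of_add_two {f : ℕ → ℝ} {x : ℝ} (h : ∀ m, f (m + 2) = x * f (m + 1) - f m)
    (m : ℕ) : f (m + 4) = (x ^ 2 - 2) * f (m + 2) - f m := by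
  linear_combination h (m + 2) + x * h (m + 1) + h m

lemma lucasVR_succ_eq_sub (x : ℝ) (n : ℕ) :
    lucasVR x (n + 1) = lucasUR x (n + 2) - lucasUR x n := by
  induction n using Nat.twoStepInduction with
  | zero => simp [lucasVR, lucasUR]
  | one => simp only [lucasVR, lucasUR]; ring
  | more n ih0 ih1 =>
    linear_combination lucasVR_add_two x (n + 1) + x * ih1 - ih0 - lucasUR_add_two x (n + 2)
      + lucasUR_add_two x n

lemma hasDerivAt_lucasVR (m : ℕ) (x : ℝ) :
    HasDerivAt (fun y => lucasVR y m) ((m : ℝ) * lucasUR x m) x := by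
  induction m using Nat.twoStepInduction with
  | zero => simpa [lucasVR, lucasUR] using hasDerivAt_const x (2 : ℝ)
  | one => simpa [lucasVR, lucasUR] using hasDerivAt_id' x
  | more n ih0 ih1 =>
    refine (((hasDerivAt_id' x).fun_mul ih1).fun_sub ih0).congr_deriv ?_
    rw [lucasVR_succ_eq_sub, lucasUR_add_two]
    push_cast
    ring

lemma lucasVR_zero_odd (n : ℕ) : lucasVR 0 (2 * n + 1) = 0 := by
  induction n with
  | zero => rfl
  | succ n ih => rw [show 2 * (n + 1) + 1 = 2 * n + 1 + 2 by ring, lucasVR_add_two, ih]; ring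

lemma wSeqR_succ_sub (t : ℝ) (n : ℕ) :
    wSeqR (1 - t ^ 2 / 2) (n + 1) - wSeqR (1 - t ^ 2 / 2) n
      = (-1) ^ (n + 1) * lucasVR t (2 * n + 2) := by
  induction n using Nat.twoStepInduction with
  | zero => simp only [wSeqR, lucasVR]; ring
  | one => simp only [wSeqR, lucasVR]; ring
  | more n ih0 ih1 =>
    have hv := add_four_of_add_two (lucasVR_add_two t) (2 * n + 2)
    rw [show 2 * (n + 2) + 2 = 2 * n + 2 + 4 by ring, hv]
    rw [show 2 * (n + 1) + 2 = 2 * n + 2 + 2 by ring] at ih1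
    have hw1 := wSeqR_add_two (1 - t ^ 2 / 2) (n + 1)
    have hw0 := wSeqR_add_two (1 - t ^ 2 / 2) n
    linear_combination (2 - t ^ 2) * ih1 - ih0 + hw1 - hw0

lemma wSeqR_eq_sum (t : ℝ) (n : ℕ) :
    wSeqR (1 - t ^ 2 / 2) n
      = 2 * ∑ k ∈ Finset.range n, (-1) ^ k * lucasUR t (2 * k + 1)
        + (-1) ^ n * lucasUR t (2 * n + 1) := by
  induction n with
  | zero => simp [wSeqR, lucasUR]
  | succ n ih =>
    have hstep := wSeqR_succ_sub t n
    rw [lucasVR_succ_eq_sub] at hstep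
    rw [Finset.sum_range_succ, show 2 * (n + 1) + 1 = 2 * n + 1 + 2 by ring]
    linear_combination hstep + ih

lemma continuous_wSeqR (n : ℕ) : Continuous fun x => wSeqR x n := by
  induction n using Nat.twoStepInduction with
  | zero => exact continuous_const
  | one => exact continuous_const.add (continuous_const.mul continuous_id)
  | more n ih0 ih1 => exact (continuous_const.mul continuous_id).mul ih1 |>.sub ih0

lemma hasDerivAt_lucasVR_odd_div (k : ℕ) (x : ℝ) :
    HasDerivAt (fun s => (-1) ^ k * lucasVR s (2 * k + 1) / (2 * (k : ℝ) + 1))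
      ((-1) ^ k * lucasUR x (2 * k + 1)) x := by
  refine (((hasDerivAt_lucasVR (2 * k + 1) x).const_mul _).div_const _).congr_deriv ?_
  push_cast
  field_simp

theorem stmt14 (n : ℕ) (t : ℝ) :
    ∫ τ in (0:ℝ)..t, wSeqR (1 - τ ^ 2 / 2) n
      = 2 * ∑ k ∈ Finset.range n, (-1 : ℝ) ^ k * lucasVR t (2 * k + 1) / (2 * (k : ℝ) + 1)
        + (-1 : ℝ) ^ n * lucasVR t (2 * n + 1) / (2 * (n : ℝ) + 1) := by
  have hderiv : ∀ x, HasDerivAt (fun s =>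
      2 * ∑ k ∈ Finset.range n, (-1 : ℝ) ^ k * lucasVR s (2 * k + 1) / (2 * (k : ℝ) + 1)
        + (-1 : ℝ) ^ n * lucasVR s (2 * n + 1) / (2 * (n : ℝ) + 1))
      (wSeqR (1 - x ^ 2 / 2) n) x := fun x => by
    rw [wSeqR_eq_sum]
    exact ((HasDerivAt.fun_sum fun k _ => hasDerivAt_lucasVR_odd_div k x).const_mul 2).add
      (hasDerivAt_lucasVR_odd_div n x)
  have hcont : Continuous fun τ : ℝ => wSeqR (1 - τ ^ 2 / 2) n :=
    (continuous_wSeqR n).comp (by fun_prop)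
  rw [intervalIntegral.integral_eq_sub_of_hasDerivAt (fun x _ => hderiv x)
    (hcont.intervalIntegrable 0 t)]
  simp [lucasVR_zero_odd]
end

section
/- For every non-negative integer n and every real number t, ∫_0^t ((−1)^n·w_n(τ²/2 − 1) − 1)/τ dτ = Σ_{k=1}^{n} (−1)^k·v_{2k}(t)/(2k) − H_n(1), where the integrand extends continuously to τ = 0 (indeed (−1)^n·w_n(τ²/2−1) − 1 is a polynomial in τ divisible by τ²). -/
/-!
Both sequences are rescaled Chebyshev polynomials: `v_n = C_n` (Vieta–Lucas) and
`w_n(x²/2 - 1) = S_{2n}(x)` (Vieta–Fibonacci, `S_m = u_{m+1}`). Telescoping the recurrence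
`S_{2k} = X S_{2k-1} - S_{2k-2}` gives `(-1)^n S_{2n} - 1 = X ∑_{k=1}^n (-1)^k S_{2k-1}`, so away
from `τ = 0` the integrand is the polynomial `∑ (-1)^k S_{2k-1}(τ)`. Since `C_m' = m S_{m-1}`
and `C_{2k}(0) = 2 (-1)^k`, its `k`-th term integrates to `(-1)^k v_{2k}(t) / (2k) - 1/k`.
-/

namespace Polynomial.Chebyshev

variable (R : Type*) [CommRing R]

theorem S_add_four (n : ℤ) : S R (n + 4) = (X ^ 2 - 2) * S R (n + 2) - S R n := by
  linear_combination (norm := ring_nf) S_add_two R (n + 2) + X * S_add_two R (n + 1)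
    + S_add_two R n

theorem derivative_C (n : ℤ) : derivative (C R n) = n * S R (n - 1) := by
  induction n using Polynomial.Chebyshev.induct' with
  | zero => simp
  | one => simp
  | add_two n ih1 ih2 =>
    have h := congr_arg derivative (C_add_two R n)
    simp only [derivative_sub, derivative_mul, derivative_X] at h
    linear_combination (norm := (push_cast; ring_nf)) h + X * ih1 - ih2
      + C_eq_S_sub_X_mul_S R (n + 1) - n * S_add_one R n
  | neg n ih =>
    rw [C_neg, ih, S_neg_sub_one]
    push_cast
    ring

theorem C_eval_two_mul_zero (n : ℕ) : (C R (2 * n)).eval 0 = 2 * (-1) ^ n := by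
  induction n with
  | zero => simp
  | succ n ih =>
    rw [show 2 * ((n + 1 : ℕ) : ℤ) = 2 * n + 2 by push_cast; ring, C_add_two]
    simp [ih, pow_succ]

theorem neg_one_pow_mul_S_two_mul (n : ℕ) :
    (-1) ^ n * S R (2 * n) = 1 + X * ∑ k ∈ Finset.Icc 1 n, (-1) ^ k * S R (2 * k - 1) := by
  induction n with
  | zero => simp
  | succ n ih =>
    rw [Finset.sum_Icc_succ_top (by omega), mul_add, ← add_assoc, ← ih]
    push_cast
    rw [show 2 * ((n : ℤ) + 1) = 2 * n + 2 by ring, S_add_two,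
      show 2 * (n : ℤ) + 2 - 1 = 2 * n + 1 by ring]
    ring

theorem integral_eval_S_sub_one (n : ℤ) (hn : n ≠ 0) (a b : ℝ) :
    ∫ τ in a..b, (S ℝ (n - 1)).eval τ = ((C ℝ n).eval b - (C ℝ n).eval a) / n := by
  have hderiv (x : ℝ) : HasDerivAt (fun τ ↦ (C ℝ n).eval τ / n) ((S ℝ (n - 1)).eval x) x := by
    have h := ((C ℝ n).hasDerivAt x).div_const (n : ℝ)
    rwa [derivative_C, eval_mul, eval_intCast, mul_div_cancel_left₀ _ (by exact_mod_cast hn)] at h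
  rw [intervalIntegral.integral_eq_sub_of_hasDerivAt (fun x _ ↦ hderiv x)
    ((S ℝ (n - 1)).continuous.intervalIntegrable a b), sub_div]

end Polynomial.Chebyshev

open Polynomial Polynomial.Chebyshev

theorem lucasVR_eq_eval_C (x : ℝ) (n : ℕ) : lucasVR x n = (C ℝ n).eval x := by
  induction n using Nat.twoStepInduction with
  | zero => simp [lucasVR]
  | one => simp [lucasVR]
  | more n ih₀ ih₁ =>
    rw [lucasVR, ih₀, ih₁]
    push_cast
    simp [C_add_two]

theorem wSeqR_sq_div_two_sub_one_eq_eval_S (x : ℝ) (n : ℕ) :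
    wSeqR (x ^ 2 / 2 - 1) n = (S ℝ (2 * n)).eval x := by
  induction n using Nat.twoStepInduction with
  | zero => simp [wSeqR]
  | one => simp [wSeqR, S_two]; ring
  | more n ih₀ ih₁ =>
    rw [wSeqR, ih₀, ih₁]
    push_cast
    rw [show 2 * ((n : ℤ) + 2) = 2 * n + 4 by ring, S_add_four,
      show 2 * ((n : ℤ) + 1) = 2 * n + 2 by ring]
    simp only [eval_sub, eval_mul, eval_pow, eval_X, eval_ofNat]
    ring

theorem neg_one_pow_mul_wSeqR_sub_one_div (n : ℕ) {τ : ℝ} (hτ : τ ≠ 0) :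
    ((-1 : ℝ) ^ n * wSeqR (τ ^ 2 / 2 - 1) n - 1) / τ
      = ∑ k ∈ Finset.Icc 1 n, (-1) ^ k * (S ℝ (2 * k - 1)).eval τ := by
  have h := congr_arg (eval τ) (neg_one_pow_mul_S_two_mul ℝ n)
  simp only [eval_mul, eval_add, eval_pow, eval_neg, eval_one, eval_X, eval_finsetSum] at h
  rw [wSeqR_sq_div_two_sub_one_eq_eval_S, h, div_eq_iff hτ]
  ring

theorem integral_neg_one_pow_mul_eval_S_two_mul_sub_one {k : ℕ} (hk : k ≠ 0) (t : ℝ) :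
    ∫ τ in (0:ℝ)..t, (-1) ^ k * (S ℝ (2 * k - 1)).eval τ
      = (-1 : ℝ) ^ k * lucasVR t (2 * k) / (2 * (k : ℝ)) - 1 / (k : ℝ) := by
  rw [intervalIntegral.integral_const_mul, integral_eval_S_sub_one _ (by omega),
    C_eval_two_mul_zero, lucasVR_eq_eval_C]
  have h_sq : (-1 : ℝ) ^ k * (-1) ^ k = 1 := by rw [← mul_pow]; norm_num
  push_cast
  field_simp
  linear_combination -2 * h_sq


theorem stmt15 (n : ℕ) (t : ℝ) :
    ∫ τ in (0:ℝ)..t, ((-1 : ℝ) ^ n * wSeqR (τ ^ 2 / 2 - 1) n - 1) / τ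
      = ∑ k ∈ Finset.Icc 1 n, (-1 : ℝ) ^ k * lucasVR t (2 * k) / (2 * (k : ℝ))
        - ∑ k ∈ Finset.Icc 1 n, 1 / (k : ℝ) := by
  have h_integrand : ∀ᵐ τ, τ ∈ Set.uIoc 0 t →
      ((-1 : ℝ) ^ n * wSeqR (τ ^ 2 / 2 - 1) n - 1) / τ
        = ∑ k ∈ Finset.Icc 1 n, (-1) ^ k * (S ℝ (2 * k - 1)).eval τ := by
    filter_upwards [MeasureTheory.Measure.ae_ne MeasureTheory.volume 0] with τ hτ _
    exact neg_one_pow_mul_wSeqR_sub_one_div n hτ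
  rw [intervalIntegral.integral_congr_ae h_integrand, intervalIntegral.integral_finsetSum
      (fun k _ ↦ ((S ℝ _).continuous.const_mul _).intervalIntegrable 0 t),
    Finset.sum_congr rfl fun k hk ↦
      integral_neg_one_pow_mul_eval_S_two_mul_sub_one (by grind) t,
    Finset.sum_sub_distrib]
end
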